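/- For fixed x₀ ∈ (0,1), the function F(y) = (e^{(x₀-2)y} - e^{-x₀y})/(2(1-e^{-2y})) is injective on ((ln(2-x₀)-ln x₀)/(2(1-x₀)), ∞); consequently, if y₁, y₂ lie in this interval and F(y₁) = F(y₂), then y₁ = y₂. -/

import Mathlib

/-!
Writing `c = 1 - x₀`, the function is `y ↦ -(sinh (c y) / sinh y) / 2`, so it suffices that
`sinh (c y) / sinh y` is strictly decreasing on `(0, ∞)` for `0 < c < 1`; the given interval lies
in `(0, ∞)` because `x₀ < 2 - x₀`. The sign of the derivative of that quotient is the sign of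
`c cosh (c y) sinh y - sinh (c y) cosh y`, which vanishes at `0` and has derivative
`-(1 - c²) sinh (c y) sinh y < 0`.
-/

open Real Set

theorem Real.const_mul_cosh_mul_sinh_lt_sinh_mul_cosh {c y : ℝ} (hc₀ : 0 < c) (hc₁ : c < 1)
    (hy : 0 < y) : c * cosh (c * y) * sinh y < sinh (c * y) * cosh y := by
  set h : ℝ → ℝ := fun t => sinh (c * t) * cosh t - c * cosh (c * t) * sinh t
  have hderiv (t : ℝ) : HasDerivAt h ((1 - c ^ 2) * (sinh (c * t) * sinh t)) t := by
    have hct := (hasDerivAt_id' t).const_mul c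
    exact ((hct.sinh.mul (hasDerivAt_cosh t)).sub
      ((hct.cosh.const_mul c).mul (hasDerivAt_sinh t))).congr_deriv (by ring)
  have hmono : StrictMonoOn h (Ici 0) := by
    refine strictMonoOn_of_hasDerivWithinAt_pos (convex_Ici 0)
      (fun t _ => (hderiv t).continuousAt.continuousWithinAt)
      (fun t _ => (hderiv t).hasDerivWithinAt) fun t ht => ?_
    rw [interior_Ici] at ht
    have : 0 < 1 - c ^ 2 := by nlinarith
    have := sinh_pos_iff.2 (mul_pos hc₀ ht)
    have := sinh_pos_iff.2 ht
    positivity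
  have := hmono self_mem_Ici hy.le hy
  simp only [h, mul_zero, sinh_zero, cosh_zero] at this
  linarith

theorem Real.strictAntiOn_sinh_const_mul_div_sinh {c : ℝ} (hc₀ : 0 < c) (hc₁ : c < 1) :
    StrictAntiOn (fun y => sinh (c * y) / sinh y) (Ioi 0) := by
  have hderiv {y : ℝ} (hy : 0 < y) := ((hasDerivAt_id' y).const_mul c).sinh.div
    (hasDerivAt_sinh y) (sinh_pos_iff.2 hy).ne'
  refine strictAntiOn_of_hasDerivWithinAt_neg (convex_Ioi 0)
    (fun y hy => (hderiv hy).continuousAt.continuousWithinAt)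
    (fun y hy => (hderiv (by simpa using hy)).hasDerivWithinAt) fun y hy => ?_
  rw [interior_Ioi] at hy
  have := const_mul_cosh_mul_sinh_lt_sinh_mul_cosh hc₀ hc₁ hy
  have := sinh_pos_iff.2 hy
  apply div_neg_of_neg_of_pos <;> nlinarith

theorem Real.exp_sub_exp_div_eq_neg_sinh_div_sinh (a y : ℝ) :
    (exp ((a - 2) * y) - exp (-a * y)) / (2 * (1 - exp (-2 * y)))
      = -(sinh ((1 - a) * y) / sinh y) / 2 := by
  have e₁ : exp (-y) * exp ((1 - a) * y) = exp (-a * y) := by rw [← exp_add]; ring_nf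
  have e₂ : exp (-y) * exp (-((1 - a) * y)) = exp ((a - 2) * y) := by rw [← exp_add]; ring_nf
  have e₃ : exp (-y) * exp y = 1 := by rw [← exp_add]; simp
  have e₄ : exp (-y) * exp (-y) = exp (-2 * y) := by rw [← exp_add]; ring_nf
  have hnum : exp ((a - 2) * y) - exp (-a * y) = exp (-y) * (-2 * sinh ((1 - a) * y)) := by
    rw [sinh_eq]; linear_combination e₁ - e₂
  have hden : 2 * (1 - exp (-2 * y)) = exp (-y) * (4 * sinh y) := by
    rw [sinh_eq]; linear_combination (-2) * e₃ + 2 * e₄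
  rw [hnum, hden, mul_div_mul_left _ _ (exp_pos _).ne']
  ring

theorem stmt_17 (x₀ : ℝ) (hx₀ : x₀ ∈ Set.Ioo (0:ℝ) 1) :
    Set.InjOn (fun y : ℝ =>
        (Real.exp ((x₀ - 2) * y) - Real.exp (-x₀ * y)) / (2 * (1 - Real.exp (-2 * y))))
      (Set.Ioi ((Real.log (2 - x₀) - Real.log x₀) / (2 * (1 - x₀)))) := by
  obtain ⟨hx₀, hx₁⟩ := hx₀
  have hleft : 0 ≤ (log (2 - x₀) - log x₀) / (2 * (1 - x₀)) :=
    div_nonneg (sub_nonneg.2 (log_le_log hx₀ (by linarith))) (by linarith)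
  intro y₁ hy₁ y₂ hy₂ hF
  simp only [exp_sub_exp_div_eq_neg_sinh_div_sinh] at hF
  exact (strictAntiOn_sinh_const_mul_div_sinh (c := 1 - x₀) (by linarith) (by linarith)).injOn
    (hleft.trans_lt hy₁) (hleft.trans_lt hy₂) (by linarith)
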